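/- Let λ be a real number. If M_λ(m(x), m(y)) ≤ m(M_λ(x, y)) holds for all x, y ∈ (0,1), then λ ≤ 0. -/

import Mathlib

open Real Set Filter

/-- Complete elliptic integral of the first kind. -/
noncomputable def K (r : ℝ) : ℝ :=
  ∫ θ in (0:ℝ)..(π/2), 1 / Real.sqrt (1 - r^2 * Real.sin θ ^ 2)

/-- Complete elliptic integral of the second kind. -/
noncomputable def E (r : ℝ) : ℝ :=
  ∫ θ in (0:ℝ)..(π/2), Real.sqrt (1 - r^2 * Real.sin θ ^ 2)

/-- Complementary complete elliptic integral of the first kind: `K'(r) = K(√(1-r²))`. -/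
noncomputable def K' (r : ℝ) : ℝ := K (Real.sqrt (1 - r^2))

/-- Complementary complete elliptic integral of the second kind: `E'(r) = E(√(1-r²))`. -/
noncomputable def E' (r : ℝ) : ℝ := E (Real.sqrt (1 - r^2))

/-- The special function `m(r) = (2/π) r'² K(r) K'(r)` (here `r'² = 1 - r²`). -/
noncomputable def m (r : ℝ) : ℝ := (2/π) * (1 - r^2) * K r * K' r

/-- The power mean of order `lam`: `M_λ(x,y)`. -/
noncomputable def pmean (lam x y : ℝ) : ℝ :=
  if lam = 0 then Real.sqrt (x * y) else ((x ^ lam + y ^ lam) / 2) ^ (1 / lam)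

open Topology MeasureTheory

/-! Suppose `λ > 0`; then `2^(-1/λ) max(a, b) ≤ M_λ(a, b) ≤ max(a, b)` for `a, b ≥ 0`.
Bounding the integrands of `K` and `K'` gives `(1 - y²) log(1/y) ≤ m(y) ≤ (π/2)(1 + log(1/y))`
on `(0, 1)`; the logarithm comes from `K'`, whose integrand is comparable to `1/(y + π/2 - θ)`.
With `x = 1/2` and `y → 0⁺` the left-hand side is at least `2^(-1/λ) m(y) → ∞`, while
`M_λ(1/2, y) ∈ [2^(-1-1/λ), 1)` keeps the right-hand side below `(π/2)(1 + log 2^(1+1/λ))`. -/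

section PowerMean

variable {lam a b : ℝ}

lemma pmean_comm (lam a b : ℝ) : pmean lam a b = pmean lam b a := by
  simp only [pmean, mul_comm a, add_comm (a ^ lam)]

lemma pmean_le_max (hlam : 0 < lam) (ha : 0 ≤ a) (hb : 0 ≤ b) : pmean lam a b ≤ max a b := by
  have hmax : 0 ≤ max a b := ha.trans (le_max_left a b)
  have hmean : (a ^ lam + b ^ lam) / 2 ≤ max a b ^ lam := by
    have := rpow_le_rpow ha (le_max_left a b) hlam.le
    have := rpow_le_rpow hb (le_max_right a b) hlam.le
    linarith
  calc pmean lam a b = ((a ^ lam + b ^ lam) / 2) ^ lam⁻¹ := by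
        rw [pmean, if_neg hlam.ne', one_div]
    _ ≤ (max a b ^ lam) ^ lam⁻¹ := by gcongr
    _ = max a b := rpow_rpow_inv hmax hlam.ne'

lemma div_two_rpow_le_pmean_left (hlam : 0 < lam) (ha : 0 ≤ a) (hb : 0 ≤ b) :
    a / 2 ^ (1 / lam) ≤ pmean lam a b := by
  calc a / 2 ^ (1 / lam) = (a ^ lam / 2) ^ lam⁻¹ := by
        rw [div_rpow (by positivity) zero_le_two, rpow_rpow_inv ha hlam.ne', one_div]
    _ ≤ ((a ^ lam + b ^ lam) / 2) ^ lam⁻¹ := by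
        gcongr
        linarith [rpow_nonneg hb lam]
    _ = pmean lam a b := by rw [pmean, if_neg hlam.ne', one_div]

lemma div_two_rpow_le_pmean_right (hlam : 0 < lam) (ha : 0 ≤ a) (hb : 0 ≤ b) :
    b / 2 ^ (1 / lam) ≤ pmean lam a b :=
  pmean_comm lam a b ▸ div_two_rpow_le_pmean_left hlam hb ha

end PowerMean

section EllipticK

variable {r : ℝ}

lemma K_nonneg (r : ℝ) : 0 ≤ K r :=
  intervalIntegral.integral_nonneg (by positivity) fun _ _ => by positivity

lemma sq_mul_sin_sq_le_sq (r θ : ℝ) : r ^ 2 * sin θ ^ 2 ≤ r ^ 2 := by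
  nlinarith [sin_sq_le_one θ, sq_nonneg r]

lemma one_sub_sq_mul_sin_sq_pos (hr : r ^ 2 < 1) (θ : ℝ) : 0 < 1 - r ^ 2 * sin θ ^ 2 := by
  linarith [sq_mul_sin_sq_le_sq r θ]

lemma intervalIntegrable_K_integrand (hr : r ^ 2 < 1) (a b : ℝ) :
    IntervalIntegrable (fun θ => 1 / √(1 - r ^ 2 * sin θ ^ 2)) volume a b :=
  intervalIntegral.intervalIntegrable_one_div
    (fun θ _ => (sqrt_pos.mpr (one_sub_sq_mul_sin_sq_pos hr θ)).ne') (by fun_prop)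

lemma pi_div_two_le_K (hr : r ^ 2 < 1) : π / 2 ≤ K r := by
  calc π / 2 = ∫ _ in (0:ℝ)..(π / 2), (1 : ℝ) := by simp
    _ ≤ K r := by
      refine intervalIntegral.integral_mono_on (by positivity) intervalIntegrable_const
        (intervalIntegrable_K_integrand hr _ _) fun θ _ => ?_
      rw [le_div_iff₀ (sqrt_pos.mpr (one_sub_sq_mul_sin_sq_pos hr θ)), one_mul, sqrt_le_one]
      nlinarith [sq_nonneg (r * sin θ)]

lemma K_le (hr : r ^ 2 < 1) : K r ≤ π / 2 / √(1 - r ^ 2) := by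
  calc K r ≤ ∫ _ in (0:ℝ)..(π / 2), 1 / √(1 - r ^ 2) := by
        refine intervalIntegral.integral_mono_on (by positivity)
          (intervalIntegrable_K_integrand hr _ _) intervalIntegrable_const fun θ _ => ?_
        gcongr
        exact sq_mul_sin_sq_le_sq r θ
    _ = π / 2 / √(1 - r ^ 2) := by simp [div_eq_mul_inv]

end EllipticK

lemma intervalIntegrable_one_div_sub {a b c : ℝ} (hab : a ≤ b) (hbc : b < c) :
    IntervalIntegrable (fun θ => 1 / (c - θ)) volume a b :=
  intervalIntegral.intervalIntegrable_one_div
    (fun θ hθ => by rw [uIcc_of_le hab] at hθ; linarith [hθ.2]) (by fun_prop)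

lemma integral_one_div_sub {a b c : ℝ} (hac : a < c) (hbc : b < c) :
    ∫ θ in a..b, 1 / (c - θ) = log ((c - a) / (c - b)) := by
  rw [intervalIntegral.integral_comp_sub_left (fun x => 1 / x),
    integral_one_div_of_pos (sub_pos.mpr hbc) (sub_pos.mpr hac)]

section EllipticK'

variable {y θ : ℝ}

lemma K'_eq_integral (hy : y ^ 2 ≤ 1) :
    K' y = ∫ θ in (0:ℝ)..(π / 2), 1 / √(cos θ ^ 2 + y ^ 2 * sin θ ^ 2) := by
  rw [K', K, sq_sqrt (sub_nonneg.mpr hy)]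
  congr 1
  funext θ
  congr 2
  linear_combination (sin_sq_add_cos_sq θ).symm

lemma sq_le_cos_sq_add_sq_mul_sin_sq (hy : y ^ 2 ≤ 1) (θ : ℝ) :
    y ^ 2 ≤ cos θ ^ 2 + y ^ 2 * sin θ ^ 2 := by
  nlinarith [sin_sq_add_cos_sq θ, sq_nonneg (cos θ)]

lemma intervalIntegrable_K'_integrand (hy0 : 0 < y) (hy1 : y ^ 2 ≤ 1) (a b : ℝ) :
    IntervalIntegrable (fun θ => 1 / √(cos θ ^ 2 + y ^ 2 * sin θ ^ 2)) volume a b :=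
  intervalIntegral.intervalIntegrable_one_div
    (fun θ _ => (sqrt_pos.mpr ((pow_pos hy0 2).trans_le
      (sq_le_cos_sq_add_sq_mul_sin_sq hy1 θ))).ne') (by fun_prop)

lemma sqrt_cos_sq_add_sq_mul_sin_sq_le (hy : 0 ≤ y) (hθ0 : 0 ≤ θ) (hθ1 : θ ≤ π / 2) :
    √(cos θ ^ 2 + y ^ 2 * sin θ ^ 2) ≤ y + π / 2 - θ := by
  have hcos : 0 ≤ cos θ := cos_nonneg_of_mem_Icc ⟨by linarith [pi_pos], hθ1⟩
  have hcos_le : cos θ ≤ π / 2 - θ := by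
    rw [← sin_pi_div_two_sub]
    exact sin_le (by linarith)
  rw [sqrt_le_left (by linarith)]
  nlinarith [sin_sq_le_one θ, mul_nonneg hy hcos,
    mul_le_mul_of_nonneg_left (sin_sq_le_one θ) (sq_nonneg y)]

lemma log_one_div_le_K' (hy0 : 0 < y) (hy1 : y ≤ 1) : log (1 / y) ≤ K' y := by
  have hy2 : y ^ 2 ≤ 1 := by nlinarith
  have hpi := pi_gt_three
  calc log (1 / y) ≤ log ((y + π / 2 - 0) / (y + π / 2 - π / 2)) := by
        gcongr <;> linarith
    _ = ∫ θ in (0:ℝ)..(π / 2), 1 / (y + π / 2 - θ) :=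
        (integral_one_div_sub (by linarith) (by linarith)).symm
    _ ≤ ∫ θ in (0:ℝ)..(π / 2), 1 / √(cos θ ^ 2 + y ^ 2 * sin θ ^ 2) := by
        refine intervalIntegral.integral_mono_on (by positivity)
          (intervalIntegrable_one_div_sub (by positivity) (by linarith))
          (intervalIntegrable_K'_integrand hy0 hy2 _ _) fun θ hθ => ?_
        exact one_div_le_one_div_of_le
          (sqrt_pos.mpr ((pow_pos hy0 2).trans_le (sq_le_cos_sq_add_sq_mul_sin_sq hy2 θ)))
          (sqrt_cos_sq_add_sq_mul_sin_sq_le hy0.le hθ.1 hθ.2)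
    _ = K' y := (K'_eq_integral hy2).symm

lemma cos_le_sqrt_cos_sq_add_sq_mul_sin_sq (y θ : ℝ) :
    cos θ ≤ √(cos θ ^ 2 + y ^ 2 * sin θ ^ 2) :=
  (le_abs_self _).trans (abs_le_sqrt (le_add_of_nonneg_right (by positivity)))

lemma K'_le (hy0 : 0 < y) (hy1 : y ≤ 1) : K' y ≤ π / 2 * (1 + log (1 / y)) := by
  have hy2 : y ^ 2 ≤ 1 := by nlinarith
  have hpi := pi_pos
  have hsplit0 : 0 ≤ π / 2 - π / 2 * y := by nlinarith
  have hsplit1 : π / 2 - π / 2 * y < π / 2 := by nlinarith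
  have hf := intervalIntegrable_K'_integrand hy0 hy2
  -- split where the bound `(π/2) / (π/2 - θ)` on the integrand reaches the bound `1 / y`
  rw [K'_eq_integral hy2,
    ← intervalIntegral.integral_add_adjacent_intervals (hf 0 (π / 2 - π / 2 * y)) (hf _ _)]
  have near_zero :
      ∫ θ in (0:ℝ)..(π / 2 - π / 2 * y), 1 / √(cos θ ^ 2 + y ^ 2 * sin θ ^ 2)
        ≤ π / 2 * log (1 / y) :=
    calc _ ≤ ∫ θ in (0:ℝ)..(π / 2 - π / 2 * y), π / 2 * (1 / (π / 2 - θ)) := by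
          refine intervalIntegral.integral_mono_on hsplit0 (hf _ _)
            ((intervalIntegrable_one_div_sub hsplit0 hsplit1).const_mul _) fun θ hθ => ?_
          have hlin : 0 < 1 - 2 / π * θ := by
            rw [sub_pos, ← lt_div_iff₀' (by positivity)]; linarith [hθ.2]
          calc 1 / √(cos θ ^ 2 + y ^ 2 * sin θ ^ 2) ≤ 1 / (1 - 2 / π * θ) :=
                one_div_le_one_div_of_le hlin
                  ((one_sub_mul_le_cos hθ.1 (by linarith [hθ.2])).trans
                    (cos_le_sqrt_cos_sq_add_sq_mul_sin_sq y θ))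
            _ = π / 2 * (1 / (π / 2 - θ)) := by field_simp
      _ = π / 2 * log (1 / y) := by
          rw [intervalIntegral.integral_const_mul, integral_one_div_sub (by linarith) (by linarith),
            sub_zero, sub_sub_cancel, div_mul_cancel_left₀ (by positivity), one_div]
  have near_pi_div_two :
      ∫ θ in (π / 2 - π / 2 * y)..(π / 2), 1 / √(cos θ ^ 2 + y ^ 2 * sin θ ^ 2)
        ≤ π / 2 :=
    calc _ ≤ ∫ _ in (π / 2 - π / 2 * y)..(π / 2), 1 / y := by
          refine intervalIntegral.integral_mono_on hsplit1.le (hf _ _) intervalIntegrable_const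
            fun θ _ => one_div_le_one_div_of_le hy0 ?_
          exact (le_sqrt hy0.le (by positivity)).mpr (sq_le_cos_sq_add_sq_mul_sin_sq hy2 θ)
      _ = π / 2 := by
          rw [intervalIntegral.integral_const, smul_eq_mul, sub_sub_cancel]
          field_simp
  linarith

end EllipticK'

section FunctionM

variable {r : ℝ}

lemma m_nonneg (hr : r ^ 2 ≤ 1) : 0 ≤ m r := by
  have := sub_nonneg.mpr hr
  have := K_nonneg r
  have := K_nonneg √(1 - r ^ 2)
  unfold m K'
  positivity

lemma one_sub_sq_mul_K_le (hr : r ^ 2 < 1) : (1 - r ^ 2) * K r ≤ π / 2 := by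
  have hr' : 0 ≤ 1 - r ^ 2 := by linarith
  calc (1 - r ^ 2) * K r ≤ (1 - r ^ 2) * (π / 2 / √(1 - r ^ 2)) := by gcongr; exact K_le hr
    _ = √(1 - r ^ 2) * (π / 2) := by
        have := sqrt_pos.mpr (sub_pos.mpr hr)
        nth_rewrite 1 [← mul_self_sqrt hr']
        field_simp
    _ ≤ π / 2 := mul_le_of_le_one_left (by positivity) (sqrt_le_one.mpr (by nlinarith))

lemma m_le (hr0 : 0 < r) (hr1 : r < 1) : m r ≤ π / 2 * (1 + log (1 / r)) := by
  have hr2 : r ^ 2 < 1 := by nlinarith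
  calc m r = 2 / π * ((1 - r ^ 2) * K r) * K' r := by rw [m]; ring
    _ ≤ 2 / π * (π / 2) * K' r := by
        have := K_nonneg √(1 - r ^ 2)
        gcongr
        exact one_sub_sq_mul_K_le hr2
    _ = K' r := by field_simp
    _ ≤ π / 2 * (1 + log (1 / r)) := K'_le hr0 hr1.le

lemma one_sub_sq_mul_log_le_m (hr0 : 0 < r) (hr1 : r < 1) : (1 - r ^ 2) * log (1 / r) ≤ m r := by
  have hr2 : r ^ 2 < 1 := by nlinarith
  have hlog : 0 ≤ log (1 / r) := log_nonneg (by rw [le_div_iff₀ hr0]; linarith)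
  have : 0 ≤ 1 - r ^ 2 := by linarith
  calc (1 - r ^ 2) * log (1 / r) = 2 / π * (1 - r ^ 2) * (π / 2 * log (1 / r)) := by
        field_simp
    _ ≤ 2 / π * (1 - r ^ 2) * (K r * K' r) :=
        mul_le_mul_of_nonneg_left
          (mul_le_mul (pi_div_two_le_K hr2) (log_one_div_le_K' hr0 hr1.le) hlog (K_nonneg r))
          (by positivity)
    _ = m r := by rw [m]; ring

lemma tendsto_m_nhdsGT_zero : Tendsto m (𝓝[>] 0) atTop := by
  have h₁ : Tendsto (fun r : ℝ => 1 - r ^ 2) (𝓝[>] 0) (𝓝 1) :=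
    ((show Continuous fun r : ℝ => 1 - r ^ 2 by fun_prop).tendsto' 0 1 (by norm_num)).mono_left
      nhdsWithin_le_nhds
  have h₂ : Tendsto (fun r => log (1 / r)) (𝓝[>] 0) atTop := by
    refine (tendsto_neg_atBot_atTop.comp tendsto_log_nhdsGT_zero).congr fun r => ?_
    simp [log_inv]
  refine tendsto_atTop_mono' _ ?_ (h₁.pos_mul_atTop one_pos h₂)
  filter_upwards [Ioo_mem_nhdsGT one_pos] with r hr using one_sub_sq_mul_log_le_m hr.1 hr.2

end FunctionM

theorem stmt_1 (lam : ℝ)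
    (h : ∀ x ∈ Set.Ioo (0:ℝ) 1, ∀ y ∈ Set.Ioo (0:ℝ) 1,
      pmean lam (m x) (m y) ≤ m (pmean lam x y)) :
    lam ≤ 0 := by
  by_contra! hlam
  set B : ℝ := 2 ^ (1 / lam)
  have hB : 0 < B := by positivity
  obtain ⟨y, hmy, hy⟩ := ((tendsto_m_nhdsGT_zero.eventually_gt_atTop
    (B * (π / 2 * (1 + log (2 * B))))).and (Ioo_mem_nhdsGT one_pos)).exists
  have hhalf : (1 / 2 : ℝ) ∈ Ioo 0 1 := by norm_num
  set z := pmean lam (1 / 2) y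
  have hz_lower : 1 / 2 / B ≤ z := div_two_rpow_le_pmean_left hlam (by norm_num) hy.1.le
  have hy0 : 0 < z := lt_of_lt_of_le (by positivity) hz_lower
  have hy1 : z < 1 :=
    (pmean_le_max hlam (by norm_num) hy.1.le).trans_lt (max_lt (by norm_num) hy.2)
  have hmy_le : m y / B ≤ π / 2 * (1 + log (2 * B)) :=
    calc m y / B ≤ pmean lam (m (1 / 2)) (m y) :=
          div_two_rpow_le_pmean_right hlam (m_nonneg (by norm_num))
            (m_nonneg (by nlinarith [hy.1, hy.2]))
      _ ≤ m z := h _ hhalf _ hy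
      _ ≤ π / 2 * (1 + log (1 / z)) := m_le hy0 hy1
      _ ≤ π / 2 * (1 + log (2 * B)) := by
          gcongr
          rwa [one_div_le hy0 (by positivity), ← div_div]
  rw [div_le_iff₀ hB] at hmy_le
  linarith
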